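/- arXiv:1201.5168 — 2 statements merged into one kernel-verified Lean document; each statement's English description precedes it below -/
import Mathlib

section
/- Let δ ∈ (0, 1/2) and set α := (1 + log(1−δ))/(1 − log δ). If T1 is a rooted balanced binary phylogenetic tree on a leaf-set of cardinality 2^m, and T2 is an arbitrary rooted binary phylogenetic tree with L(T2) = L(T1), then mast{T1, T2} ≥ α·m. -/
/-!
# Rooted binary phylogenetic trees

`RTree L` is the type of rooted binary trees with leaves labelled by elements of `L`:
every internal vertex has exactly two children (a left child and a right child), and
a tree with one leaf is a single vertex.
-/

inductive RTree (L : Type) : Type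
  | leaf : L → RTree L
  | node : RTree L → RTree L → RTree L

namespace RTree

variable {L : Type}

/-- The list of leaf labels of a rooted binary tree, read from left to right. -/
def leafList : RTree L → List L
  | leaf b => [b]
  | node l r => leafList l ++ leafList r

/-- The number of leaves of a rooted binary tree. -/
def numLeaves (T : RTree L) : ℕ := T.leafList.length

/-- The set of leaf labels of a rooted binary tree. -/
def leafSet (T : RTree L) : Set L := {b | b ∈ T.leafList}

/-- The height of a rooted binary tree: the maximum distance from the root to a leaf. -/
def height : RTree L → ℕ
  | leaf _ => 0
  | node l r => max (height l) (height r) + 1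

/-- A rooted binary tree is balanced if all of its leaves are at the same distance
from the root. -/
def IsBalanced : RTree L → Prop
  | leaf _ => True
  | node l r => IsBalanced l ∧ IsBalanced r ∧ height l = height r

/-- A rooted binary tree is phylogenetic if its leaves are labelled bijectively by a
finite set, i.e. all leaf labels are distinct. -/
def IsPhylo (T : RTree L) : Prop := T.leafList.Nodup

/-- `Embeds S T` is the subtree relation `S ⪯ T`: there is an injective map `f` from the
vertices of `S` to the vertices of `T` such that `f x = x` for every leaf `x` of `S`
(leaves being identified across trees by their labels) and
`f (x ∧ y) = f x ∧ f y` for all vertices `x`, `y` of `S`, where `∧` denotes the most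
recent common ancestor.  Equivalently (for trees with distinct leaf labels), `S` is the
restriction of `T` to the leaf set of `S`, up to rooted isomorphism; this structural
characterization is taken as the definition. -/
inductive Embeds : RTree L → RTree L → Prop
  | leaf (b : L) : Embeds (RTree.leaf b) (RTree.leaf b)
  | left {S l r : RTree L} : Embeds S l → Embeds S (RTree.node l r)
  | right {S l r : RTree L} : Embeds S r → Embeds S (RTree.node l r)
  | pair {s₁ s₂ l r : RTree L} :
      Embeds s₁ l → Embeds s₂ r → Embeds (RTree.node s₁ s₂) (RTree.node l r)
  | pair_swap {s₁ s₂ l r : RTree L} :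
      Embeds s₁ r → Embeds s₂ l → Embeds (RTree.node s₁ s₂) (RTree.node l r)

/-- `mast T₁ T₂` is the maximum cardinality of a subset `X ⊆ L(T₁) ∩ L(T₂)` such that
the restrictions `T₁|X` and `T₂|X` are isomorphic; equivalently, the maximum number of
leaves of a rooted binary phylogenetic tree `S` with `S ⪯ T₁` and `S ⪯ T₂`. -/
noncomputable def mast (T₁ T₂ : RTree L) : ℕ :=
  sSup {n | ∃ S : RTree L, S.IsPhylo ∧ Embeds S T₁ ∧ Embeds S T₂ ∧ S.numLeaves = n}

end RTree

/-!
Recurse down the balanced tree `T₁`, keeping a set `C` of leaves shared by the current subtree `v`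
of `T₁` and a subtree `u` of `T₂`. If one child of `v` holds a fraction `1 - δ` of `C`, descend
into it. Otherwise take a subtree `w` of `u` containing between `(1 - δ)|C|/2` and `(1 - δ)|C|`
leaves of `C`. Then one child of `v` holds at least `δ(1 - δ)|C|/2` of these, while some leaf
`x ∈ C` outside `w` lies in the other child, so `x` can be attached as a cherry to the common
subtree found recursively in that child and `w`. Each level costs a factor `1 - δ` and each
attached leaf gains a factor `2/δ`, whence `2^m (1 - δ)^m ≤ (2/δ)^|S|`; now take `log₂`.
-/

namespace RTree

open Finset

variable {L : Type}

inductive IsSubtree : RTree L → RTree L → Prop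
  | refl (t : RTree L) : IsSubtree t t
  | left {w l r : RTree L} : IsSubtree w l → IsSubtree w (node l r)
  | right {w l r : RTree L} : IsSubtree w r → IsSubtree w (node l r)

def IsCommon (S T₁ T₂ : RTree L) : Prop := S.IsPhylo ∧ Embeds S T₁ ∧ Embeds S T₂

lemma embeds_leaf_of_mem {b : L} {T : RTree L} (hb : b ∈ T.leafList) : Embeds (leaf b) T := by
  induction T with
  | leaf c =>
    obtain rfl : b = c := by simpa [leafList] using hb
    exact Embeds.leaf b
  | node l r ihl ihr =>
    rcases List.mem_append.mp hb with hb | hb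
    · exact Embeds.left (ihl hb)
    · exact Embeds.right (ihr hb)

lemma Embeds.leafList_subset {S T : RTree L} (h : Embeds S T) : S.leafList ⊆ T.leafList := by
  induction h with
  | leaf b => exact List.Subset.refl _
  | left _ ih => exact List.subset_append_of_subset_left _ ih
  | right _ ih => exact List.subset_append_of_subset_right _ ih
  | pair _ _ ih₁ ih₂ =>
    simp only [leafList, List.append_subset]
    exact ⟨List.subset_append_of_subset_left _ ih₁, List.subset_append_of_subset_right _ ih₂⟩
  | pair_swap _ _ ih₁ ih₂ =>
    simp only [leafList, List.append_subset]
    exact ⟨List.subset_append_of_subset_right _ ih₁, List.subset_append_of_subset_left _ ih₂⟩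

lemma Embeds.numLeaves_le {S T : RTree L} (h : Embeds S T) : S.numLeaves ≤ T.numLeaves := by
  induction h <;> simp only [numLeaves, leafList, List.length_append] at * <;> omega

lemma Embeds.trans_isSubtree {S w u : RTree L} (hS : Embeds S w) (hw : IsSubtree w u) :
    Embeds S u := by
  induction hw with
  | refl => exact hS
  | left _ ih => exact Embeds.left ih
  | right _ ih => exact Embeds.right ih

lemma embeds_node_leaf_of_isSubtree {S w u : RTree L} {x : L} (hw : IsSubtree w u)
    (hS : Embeds S w) (hxu : x ∈ u.leafList) (hxw : x ∉ w.leafList) :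
    Embeds (node S (leaf x)) u := by
  induction hw with
  | refl => exact absurd hxu hxw
  | @left l r hwl ih =>
    rcases List.mem_append.mp hxu with hx | hx
    · exact Embeds.left (ih hx)
    · exact Embeds.pair (hS.trans_isSubtree hwl) (embeds_leaf_of_mem hx)
  | @right l r hwr ih =>
    rcases List.mem_append.mp hxu with hx | hx
    · exact Embeds.pair_swap (hS.trans_isSubtree hwr) (embeds_leaf_of_mem hx)
    · exact Embeds.right (ih hx)

lemma isPhylo_node_leaf {S : RTree L} {x : L} (hS : S.IsPhylo) (hx : x ∉ S.leafList) :
    (node S (leaf x)).IsPhylo :=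
  List.nodup_append.mpr ⟨hS, List.nodup_singleton x,
    by simpa [leafList] using fun a ha (h : a = x) => hx (h ▸ ha)⟩

lemma IsBalanced.numLeaves_eq {T : RTree L} (hT : T.IsBalanced) :
    T.numLeaves = 2 ^ T.height := by
  induction T with
  | leaf b => rfl
  | node l r ihl ihr =>
    obtain ⟨hl, hr, hlr⟩ := hT
    simp only [numLeaves, leafList, List.length_append, height] at *
    rw [ihl hl, ihr hr, hlr, max_self, pow_succ]
    ring

lemma numLeaves_le_mast {S T₁ T₂ : RTree L} (hS : IsCommon S T₁ T₂) :
    S.numLeaves ≤ mast T₁ T₂ :=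
  le_csSup ⟨T₁.numLeaves, fun _ ⟨_, _, hS₁, _, hn⟩ => hn ▸ hS₁.numLeaves_le⟩
    ⟨S, hS.1, hS.2.1, hS.2.2, rfl⟩

variable [DecidableEq L]

def leafFinset (T : RTree L) : Finset L := T.leafList.toFinset

@[simp]
lemma mem_leafFinset {T : RTree L} {x : L} : x ∈ T.leafFinset ↔ x ∈ T.leafList :=
  List.mem_toFinset

@[simp]
lemma leafFinset_leaf (b : L) : (leaf b).leafFinset = {b} := rfl

@[simp]
lemma leafFinset_node (l r : RTree L) : (node l r).leafFinset = l.leafFinset ∪ r.leafFinset :=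
  List.toFinset_append

lemma IsPhylo.card_leafFinset {T : RTree L} (hT : T.IsPhylo) : #T.leafFinset = T.numLeaves :=
  List.toFinset_card_of_nodup hT

lemma IsPhylo.disjoint_leafFinset {l r : RTree L} (h : (node l r).IsPhylo) :
    Disjoint l.leafFinset r.leafFinset := by
  rw [disjoint_iff_ne]
  rintro a ha b hb rfl
  exact List.disjoint_of_nodup_append h (mem_leafFinset.mp ha) (mem_leafFinset.mp hb)

lemma exists_isSubtree_card_inter_mem_Ioc (C : Finset L) {t : ℝ} (ht : 1 ≤ t) (u : RTree L)
    (hu : t < #(C ∩ u.leafFinset)) :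
    ∃ w, IsSubtree w u ∧ (#(C ∩ w.leafFinset) : ℝ) ∈ Set.Ioc (t / 2) t := by
  induction u with
  | leaf b =>
    have : #(C ∩ {b}) ≤ 1 := (card_le_card inter_subset_right).trans_eq
      (card_singleton b)
    rw [leafFinset_leaf] at hu
    exact absurd hu (not_lt.mpr (ht.trans' (by exact_mod_cast this)))
  | node l r ihl ihr =>
    by_cases hl : t < #(C ∩ l.leafFinset)
    · obtain ⟨w, hw, hwt⟩ := ihl hl
      exact ⟨w, hw.left, hwt⟩
    by_cases hr : t < #(C ∩ r.leafFinset)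
    · obtain ⟨w, hw, hwt⟩ := ihr hr
      exact ⟨w, hw.right, hwt⟩
    have hsplit :
        (#(C ∩ (node l r).leafFinset) : ℝ) ≤ #(C ∩ l.leafFinset) + #(C ∩ r.leafFinset) := by
      rw [leafFinset_node, inter_union_distrib_left]
      exact_mod_cast card_union_le _ _
    rcases le_total (#(C ∩ r.leafFinset)) (#(C ∩ l.leafFinset)) with hlr | hlr
    · refine ⟨l, (IsSubtree.refl l).left, ?_, not_lt.mp hl⟩
      have : (#(C ∩ r.leafFinset) : ℝ) ≤ #(C ∩ l.leafFinset) := by exact_mod_cast hlr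
      linarith
    · refine ⟨r, (IsSubtree.refl r).right, ?_, not_lt.mp hr⟩
      have : (#(C ∩ l.leafFinset) : ℝ) ≤ #(C ∩ r.leafFinset) := by exact_mod_cast hlr
      linarith

variable {δ : ℝ}

def HasCommonSubtreeBound (δ : ℝ) (v : RTree L) : Prop :=
  ∀ (u : RTree L) (C : Finset L), C.Nonempty → C ⊆ v.leafFinset → C ⊆ u.leafFinset →
    ∃ S, IsCommon S v u ∧ #C * (1 - δ) ^ v.height ≤ (2 / δ) ^ S.numLeaves

lemma hasCommonSubtreeBound_leaf (hδ0 : 0 < δ) (hδ2 : δ ≤ 2) (b : L) :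
    HasCommonSubtreeBound δ (leaf b) := by
  intro u C hC hCv hCu
  obtain rfl : C = {b} := (subset_singleton_iff.mp hCv).resolve_left hC.ne_empty
  refine ⟨leaf b, ⟨List.nodup_singleton b, Embeds.leaf b, embeds_leaf_of_mem ?_⟩, ?_⟩
  · exact mem_leafFinset.mp (hCu (mem_singleton_self b))
  · simpa [height, numLeaves, leafList, le_div_iff₀ hδ0] using hδ2

lemma exists_common_of_heavy_child {A v u : RTree L} {C C' : Finset L} (hδ : δ < 1)
    (hA : HasCommonSubtreeBound δ A) (hAv : ∀ S, Embeds S A → Embeds S v)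
    (hh : v.height = A.height + 1) (hC : C.Nonempty) (hC'A : C' ⊆ A.leafFinset)
    (hC'C : C' ⊆ C) (hCu : C ⊆ u.leafFinset) (hcard : (1 - δ) * #C ≤ #C') :
    ∃ S, IsCommon S v u ∧ #C * (1 - δ) ^ v.height ≤ (2 / δ) ^ S.numLeaves := by
  have hC' : C'.Nonempty := by
    rw [← card_pos, ← Nat.cast_pos (α := ℝ)]
    exact (mul_pos (by linarith) (by exact_mod_cast hC.card_pos)).trans_le hcard
  obtain ⟨S, ⟨hS, hSA, hSu⟩, hbound⟩ := hA u C' hC' hC'A (hC'C.trans hCu)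
  refine ⟨S, ⟨hS, hAv S hSA, hSu⟩, ?_⟩
  calc (#C : ℝ) * (1 - δ) ^ v.height = (1 - δ) * #C * (1 - δ) ^ A.height := by
        rw [hh, pow_succ]; ring
    _ ≤ #C' * (1 - δ) ^ A.height := by gcongr
    _ ≤ _ := hbound

lemma exists_common_of_split_child {A v w u : RTree L} {C D : Finset L} {x : L}
    (hδ0 : 0 < δ) (hδ : δ < 1) (hA : HasCommonSubtreeBound δ A)
    (hAv : ∀ S, Embeds S A → Embeds (node S (leaf x)) v) (hh : v.height = A.height + 1)
    (hw : IsSubtree w u) (hxA : x ∉ A.leafList) (hxu : x ∈ u.leafList) (hxw : x ∉ w.leafList)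
    (hC : C.Nonempty) (hDA : D ⊆ A.leafFinset) (hDw : D ⊆ w.leafFinset)
    (hcard : δ * (1 - δ) * #C / 2 ≤ #D) :
    ∃ S, IsCommon S v u ∧ #C * (1 - δ) ^ v.height ≤ (2 / δ) ^ S.numLeaves := by
  have hD : D.Nonempty := by
    rw [← card_pos, ← Nat.cast_pos (α := ℝ)]
    refine lt_of_lt_of_le ?_ hcard
    have : (0 : ℝ) < #C := by exact_mod_cast hC.card_pos
    have : 0 < 1 - δ := by linarith
    positivity
  obtain ⟨S, ⟨hS, hSA, hSw⟩, hbound⟩ := hA w D hD hDA hDw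
  refine ⟨node S (leaf x), ⟨isPhylo_node_leaf hS fun hxS => hxA (hSA.leafList_subset hxS),
    hAv S hSA, embeds_node_leaf_of_isSubtree hw hSw hxu hxw⟩, ?_⟩
  have : 0 ≤ 1 - δ := by linarith
  calc (#C : ℝ) * (1 - δ) ^ v.height
        = δ * (1 - δ) * #C / 2 * (1 - δ) ^ A.height * (2 / δ) := by
        rw [hh, pow_succ]; field_simp
    _ ≤ #D * (1 - δ) ^ A.height * (2 / δ) := by gcongr
    _ ≤ (2 / δ) ^ S.numLeaves * (2 / δ) := by gcongr
    _ = (2 / δ) ^ (node S (leaf x)).numLeaves := by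
        simp only [numLeaves, leafList, List.length_append, List.length_singleton, pow_succ]

lemma exists_outside_and_heavy_side {C P Q W : Finset L} (hδ0 : 0 ≤ δ) (hδ : δ ≤ 1 / 2)
    (hC : C ⊆ P ∪ Q) (hP : δ * #C ≤ #(C ∩ P)) (hQ : δ * #C ≤ #(C ∩ Q))
    (hW : (1 - δ) * #C / 2 < #(C ∩ W)) (hE : (C \ W).Nonempty) :
    (∃ x ∈ C \ W, x ∈ Q ∧ δ * (1 - δ) * #C / 2 ≤ #(C ∩ W ∩ P)) ∨
      (∃ x ∈ C \ W, x ∈ P ∧ δ * (1 - δ) * #C / 2 ≤ #(C ∩ W ∩ Q)) := by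
  obtain ⟨x, hx⟩ := hE
  wlog hxQ : x ∈ Q generalizing P Q
  · have hxP : x ∈ P := by
      simpa [hxQ] using hC (mem_sdiff.mp hx).1
    exact (this (by rwa [union_comm]) hQ hP hxP).symm
  by_cases hWP : δ * (1 - δ) * #C / 2 ≤ #(C ∩ W ∩ P)
  · exact Or.inl ⟨x, hx, hxQ, hWP⟩
  rw [not_le] at hWP
  have hC0 : (0 : ℝ) ≤ #C := by positivity
  obtain ⟨y, hy, hyP⟩ : ∃ y ∈ C \ W, y ∈ P := by
    by_contra! hCP
    have hsub : C ∩ P ⊆ C ∩ W ∩ P := fun y hy => by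
      simp only [mem_inter] at hy ⊢
      by_contra hyW
      exact hCP y (mem_sdiff.mpr ⟨hy.1, fun h => hyW ⟨⟨hy.1, h⟩, hy.2⟩⟩) hy.2
    have : (#(C ∩ P) : ℝ) ≤ #(C ∩ W ∩ P) := by exact_mod_cast card_le_card hsub
    nlinarith
  have hsplit : (#(C ∩ W) : ℝ) ≤ #(C ∩ W ∩ P) + #(C ∩ W ∩ Q) := by
    have : C ∩ W = C ∩ W ∩ P ∪ C ∩ W ∩ Q := by
      rw [← inter_union_distrib_left, inter_eq_left.mpr (inter_subset_left.trans hC)]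
    exact_mod_cast (card_le_card this.le).trans (card_union_le _ _)
  exact Or.inr ⟨y, hy, hyP, by nlinarith⟩

lemma hasCommonSubtreeBound_node (hδ0 : 0 < δ) (hδ : δ < 1 / 2) {l r : RTree L}
    (hl : HasCommonSubtreeBound δ l) (hr : HasCommonSubtreeBound δ r) (hlr : l.height = r.height)
    (hdisj : Disjoint l.leafFinset r.leafFinset) : HasCommonSubtreeBound δ (node l r) := by
  intro u C hC hCv hCu
  have hδ1 : δ < 1 := by linarith
  have hhl : (node l r).height = l.height + 1 := by simp [height, hlr]
  have hhr : (node l r).height = r.height + 1 := by simp [height, hlr]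
  rw [leafFinset_node] at hCv
  have hsum : #(C ∩ l.leafFinset) + #(C ∩ r.leafFinset) = #C := by
    rw [← card_union_of_disjoint
      (hdisj.mono inter_subset_right inter_subset_right),
      ← inter_union_distrib_left, inter_eq_left.mpr hCv]
  have hsumR : (#(C ∩ l.leafFinset) : ℝ) + #(C ∩ r.leafFinset) = #C := by exact_mod_cast hsum
  have hCpos : (0 : ℝ) < #C := by exact_mod_cast hC.card_pos
  by_cases hrsmall : #(C ∩ r.leafFinset) < δ * #C
  · exact exists_common_of_heavy_child hδ1 hl (fun _ => Embeds.left) hhl hC inter_subset_right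
      inter_subset_left hCu (by linarith)
  by_cases hlsmall : #(C ∩ l.leafFinset) < δ * #C
  · exact exists_common_of_heavy_child hδ1 hr (fun _ => Embeds.right) hhr hC inter_subset_right
      inter_subset_left hCu (by linarith)
  rw [not_lt] at hrsmall hlsmall
  have hC2 : (2 : ℝ) ≤ #C := by
    have hlpos : 0 < #(C ∩ l.leafFinset) := Nat.cast_pos.mp (hlsmall.trans_lt' (by positivity))
    have hrpos : 0 < #(C ∩ r.leafFinset) := Nat.cast_pos.mp (hrsmall.trans_lt' (by positivity))
    exact_mod_cast (by omega : 2 ≤ #C)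
  obtain ⟨w, hw, htw, hwt⟩ := exists_isSubtree_card_inter_mem_Ioc C (t := (1 - δ) * #C)
    (by nlinarith) u (by rw [inter_eq_left.mpr hCu]; nlinarith)
  have hE : (C \ w.leafFinset).Nonempty := sdiff_nonempty.mpr fun hCw => by
    rw [inter_eq_left.mpr hCw] at hwt
    nlinarith
  rcases exists_outside_and_heavy_side hδ0.le hδ.le hCv hlsmall hrsmall htw hE with
    ⟨x, hx, hxr, hD⟩ | ⟨x, hx, hxl, hD⟩
  · rw [mem_sdiff, mem_leafFinset] at hx
    exact exists_common_of_split_child hδ0 hδ1 hl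
      (fun _ hS => hS.pair (embeds_leaf_of_mem (mem_leafFinset.mp hxr))) hhl hw
      (fun hxl => disjoint_left.mp hdisj (mem_leafFinset.mpr hxl) hxr)
      (mem_leafFinset.mp (hCu hx.1)) hx.2 hC inter_subset_right
      (inter_subset_left.trans inter_subset_right) hD
  · rw [mem_sdiff, mem_leafFinset] at hx
    exact exists_common_of_split_child hδ0 hδ1 hr
      (fun _ hS => hS.pair_swap (embeds_leaf_of_mem (mem_leafFinset.mp hxl))) hhr hw
      (fun hxr => disjoint_left.mp hdisj hxl (mem_leafFinset.mpr hxr))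
      (mem_leafFinset.mp (hCu hx.1)) hx.2 hC inter_subset_right
      (inter_subset_left.trans inter_subset_right) hD

lemma IsBalanced.hasCommonSubtreeBound (hδ0 : 0 < δ) (hδ : δ < 1 / 2) {v : RTree L}
    (hb : v.IsBalanced) (hp : v.IsPhylo) : HasCommonSubtreeBound δ v := by
  induction v with
  | leaf b => exact hasCommonSubtreeBound_leaf hδ0 (by linarith) b
  | node l r ihl ihr =>
    obtain ⟨hbl, hbr, hlr⟩ := hb
    exact hasCommonSubtreeBound_node hδ0 hδ (ihl hbl (List.Nodup.of_append_left hp))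
      (ihr hbr (List.Nodup.of_append_right hp)) hlr hp.disjoint_leafFinset

end RTree

lemma div_mul_le_of_two_pow_mul_pow_le {δ : ℝ} (hδ0 : 0 < δ) (hδ1 : δ < 1) {m k : ℕ}
    (h : (2 : ℝ) ^ m * (1 - δ) ^ m ≤ (2 / δ) ^ k) :
    (1 + Real.logb 2 (1 - δ)) / (1 - Real.logb 2 δ) * m ≤ k := by
  have h1δ : 0 < 1 - δ := by linarith
  have hden : 0 < 1 - Real.logb 2 δ := by
    linarith [Real.logb_neg one_lt_two hδ0 hδ1]
  have hlog := Real.logb_le_logb_of_le one_lt_two (by positivity) h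
  rw [Real.logb_mul (by positivity) (by positivity),
    Real.logb_pow, Real.logb_pow, Real.logb_pow, Real.logb_div two_ne_zero hδ0.ne',
    Real.logb_self_eq_one one_lt_two] at hlog
  rw [div_mul_eq_mul_div, div_le_iff₀ hden]
  linarith

theorem stmt_2_general {L : Type} (m : ℕ) (T₁ T₂ : RTree L) (δ : ℝ)
    (h₁ : T₁.IsPhylo)
    (hbal : T₁.IsBalanced) (hcard : T₁.numLeaves = 2 ^ m)
    (hL : T₂.leafSet = T₁.leafSet)
    (hδ : δ ∈ Set.Ioo (0 : ℝ) (1/2)) :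
    (1 + Real.logb 2 (1 - δ)) / (1 - Real.logb 2 δ) * m ≤ (RTree.mast T₁ T₂ : ℝ) := by
  classical
  obtain ⟨hδ0, hδ⟩ := hδ
  have hheight : T₁.height = m :=
    Nat.pow_right_injective le_rfl (hbal.numLeaves_eq.symm.trans hcard)
  have hcardC : T₁.leafFinset.card = 2 ^ m := h₁.card_leafFinset.trans hcard
  have hC : T₁.leafFinset.Nonempty := Finset.card_pos.mp (hcardC ▸ by positivity)
  have hCu : T₁.leafFinset ⊆ T₂.leafFinset := fun x hx =>
    RTree.mem_leafFinset.mpr (show x ∈ T₂.leafSet from hL ▸ RTree.mem_leafFinset.mp hx)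
  obtain ⟨S, hS, hbound⟩ :=
    hbal.hasCommonSubtreeBound hδ0 hδ h₁ T₂ T₁.leafFinset hC subset_rfl hCu
  rw [hcardC, hheight, Nat.cast_pow, Nat.cast_ofNat] at hbound
  calc _ ≤ (S.numLeaves : ℝ) := div_mul_le_of_two_pow_mul_pow_le hδ0 (by linarith) hbound
    _ ≤ RTree.mast T₁ T₂ := by exact_mod_cast RTree.numLeaves_le_mast hS

/-- Let `δ ∈ (0,1/2)` and `α := (1 + log(1-δ))/(1 - log δ)`.  If `T₁`
is a rooted balanced binary phylogenetic tree on `2^m` leaves and `T₂` is an arbitrary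
rooted binary phylogenetic tree with `L(T₂) = L(T₁)`, then `mast{T₁,T₂} ≥ α·m`. -/
theorem stmt_2 {L : Type} (m : ℕ) (T₁ T₂ : RTree L) (δ : ℝ)
    (h₁ : T₁.IsPhylo) (h₂ : T₂.IsPhylo)
    (hbal : T₁.IsBalanced) (hcard : T₁.numLeaves = 2 ^ m)
    (hL : T₂.leafSet = T₁.leafSet)
    (hδ : δ ∈ Set.Ioo (0 : ℝ) (1/2)) :
    (1 + Real.logb 2 (1 - δ)) / (1 - Real.logb 2 δ) * m ≤ (RTree.mast T₁ T₂ : ℝ) :=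
  stmt_2_general m T₁ T₂ δ h₁ hbal hcard hL hδ
end

section
/- For every real k > 0 there is a constant α_k > 0 such that: if T1 and T2 are (unrooted) binary phylogenetic trees on the same leaf-set of cardinality n, and T1 has radius at most k·log n − 1, then mast{T1, T2} ≥ α_k·log n. -/
/-!
# Unrooted binary phylogenetic trees, via rooted representatives

An unrooted binary phylogenetic tree (all internal vertices of degree 3) with at least
two leaves is represented by any rooted binary tree obtained from it by subdividing an
edge and rooting there; conversely, suppressing the (degree-2) root of a rooted binary
tree yields an unrooted one.  Two rooted trees represent the same unrooted tree (i.e.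
the unrooted trees are isomorphic by a graph isomorphism fixing every leaf label) iff
they are related by the equivalence relation `URel` generated by moving the root across
an edge together with (unordered) rooted isomorphism.
-/

namespace RTree

variable {L : Type}

/-- Rooted isomorphism of rooted binary trees, fixing all leaf labels (the two children
of a vertex are unordered). -/
inductive RIso : RTree L → RTree L → Prop
  | leaf (b : L) : RIso (RTree.leaf b) (RTree.leaf b)
  | pair {a b c d : RTree L} :
      RIso a c → RIso b d → RIso (RTree.node a b) (RTree.node c d)
  | pair_swap {a b c d : RTree L} :
      RIso a d → RIso b c → RIso (RTree.node a b) (RTree.node c d)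

/-- Moving the root of a rooted binary tree across one edge of the underlying unrooted
tree: this does not change the unrooted tree obtained by suppressing the root. -/
inductive RootMove : RTree L → RTree L → Prop
  | assoc (a b c : RTree L) :
      RootMove (RTree.node a (RTree.node b c)) (RTree.node (RTree.node a b) c)

/-- `URel S T` holds iff the unrooted binary trees obtained from `S` and `T` by
suppressing their roots are isomorphic by a graph isomorphism fixing every leaf label. -/
def URel (S T : RTree L) : Prop :=
  Relation.EqvGen (fun X Y => RootMove X Y ∨ RIso X Y) S T

/-- `umast T₁ T₂` is the maximum agreement subtree size of the *unrooted* binary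
phylogenetic trees represented by `T₁` and `T₂`: the maximum cardinality of a set
`X ⊆ L(T₁) ∩ L(T₂)` such that the unrooted restrictions `T₁|X` and `T₂|X` are
isomorphic (fixing leaf labels).  Equivalently, the maximum number of leaves of a
common unrooted subtree, given here by a pair of rooted representatives. -/
noncomputable def umast (T₁ T₂ : RTree L) : ℕ :=
  sSup {n | ∃ S₁ S₂ : RTree L, S₁.IsPhylo ∧ S₂.IsPhylo ∧
    Embeds S₁ T₁ ∧ Embeds S₂ T₂ ∧ URel S₁ S₂ ∧ S₁.numLeaves = n}

end RTree

namespace RTree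

variable {L : Type}

/-- The maximum length (number of edges) of a path in a rooted binary tree (the root
counting as a genuine degree-2 vertex). -/
def rdiam : RTree L → ℕ
  | RTree.leaf _ => 0
  | RTree.node l r => max (max (rdiam l) (rdiam r)) (l.height + r.height + 2)

/-- The diameter of the unrooted tree obtained by suppressing the root: the longest
path through the (suppressed) root loses one edge. -/
def udiam : RTree L → ℕ
  | RTree.leaf _ => 0
  | RTree.node l r => max (max (rdiam l) (rdiam r)) (l.height + r.height + 1)

/-- The radius of the unrooted tree represented by a rooted binary tree: the minimum
over vertices `u` of the maximum distance from `u` to any other vertex.  For a tree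
this equals `⌈diameter / 2⌉`. -/
def uradius (T : RTree L) : ℕ := (udiam T + 1) / 2

end RTree

/-!
A rooted agreement subtree of two rooted representatives is also an unrooted one, and a rooted
representative of `T₁` has height at most twice the radius of `T₁`. So it suffices to find, for
`T₁ = (A, B)` of height `h` and `T₂ = (X, Y)` on the same `m` leaves, a common rooted subtree `S`
with `log m ≤ t |S| + 3h / 2^t`, for a fixed `t ≥ 2`. This goes by induction on `h`.

One of `A ∩ X`, `A ∩ Y`, `B ∩ X`, `B ∩ Y` has at least `m / 4 ≥ m / 2^t` leaves, say `A ∩ X`.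
If `B ∩ Y ≠ ∅`, an agreement subtree of `A|X` and `X|A` together with one leaf of `B ∩ Y` works:
one more leaf pays for the loss of at most `t` in `log m`. Otherwise `B ⊆ X` and `Y ⊆ A`, and
either `B ∩ X = B` has at least `m / 2^t` leaves and the same argument applies to `B ∩ X` and a
leaf of `A ∩ Y`, or `B` is small: then comparing `A` with `T₂|A` loses at most
`log (1 + 2 / 2^t) ≤ 3 / 2^t` in `log m` but one unit of height.

Finally `h ≤ 2k log n` and `2^t ≥ 12k` give `|S| ≥ log n / (2t)`.
-/

theorem Real.logb_le_add_logb_of_le_two_pow_mul {x y : ℝ} {t : ℕ} (hx : 0 < x) (hy : 0 < y)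
    (h : x ≤ 2 ^ t * y) : Real.logb 2 x ≤ t + Real.logb 2 y := by
  calc Real.logb 2 x ≤ Real.logb 2 (2 ^ t * y) := Real.logb_le_logb_of_le one_lt_two hx h
    _ = t + Real.logb 2 y := by
      rw [Real.logb_mul (by positivity) hy.ne', Real.logb_pow, Real.logb_self_eq_one one_lt_two,
        mul_one]

theorem Real.logb_le_logb_add_of_two_pow_mul_sub_lt {x y : ℝ} {t : ℕ} (hx : 0 < x) (hy : 0 < y)
    (ht : 1 ≤ t) (h : 2 ^ t * (x - y) < x) : Real.logb 2 x ≤ Real.logb 2 y + 3 / 2 ^ t := by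
  have h2t : (2 : ℝ) ≤ 2 ^ t := le_self_pow₀ one_le_two (by omega)
  have hratio : x / y - 1 ≤ 2 / 2 ^ t := by
    rw [div_sub_one hy.ne', div_le_div_iff₀ hy (by positivity)]
    nlinarith
  have hlog2 : 2 / 3 < Real.log 2 := by linarith [Real.log_two_gt_d9]
  have hlog : Real.log (x / y) ≤ 3 / 2 ^ t * Real.log 2 := by
    calc Real.log (x / y) ≤ x / y - 1 := Real.log_le_sub_one_of_pos (by positivity)
      _ ≤ 3 / 2 ^ t * (2 / 3) := hratio.trans_eq (by ring)
      _ ≤ 3 / 2 ^ t * Real.log 2 := by gcongr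
  rw [← sub_le_iff_le_add', ← Real.logb_div hx.ne' hy.ne', Real.logb,
    div_le_iff₀ (by positivity)]
  exact hlog

namespace RTree

variable {L : Type} {t : ℕ}

theorem leafList_ne_nil (T : RTree L) : T.leafList ≠ [] := by
  induction T with
  | leaf b => simp [leafList]
  | node l r ihl _ => simp [leafList, ihl]

theorem numLeaves_pos (T : RTree L) : 0 < T.numLeaves :=
  List.length_pos_iff.mpr T.leafList_ne_nil

theorem exists_mem_leafList (T : RTree L) : ∃ x, x ∈ T.leafList :=
  List.exists_mem_of_ne_nil _ T.leafList_ne_nil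

@[simp]
theorem numLeaves_node (l r : RTree L) : (node l r).numLeaves = l.numLeaves + r.numLeaves :=
  List.length_append

@[simp]
theorem mem_leafSet {T : RTree L} {x : L} : x ∈ T.leafSet ↔ x ∈ T.leafList := Iff.rfl

theorem height_node_comm (l r : RTree L) : (node l r).height = (node r l).height := by
  simp [height, Nat.max_comm]

theorem numLeaves_node_comm (l r : RTree L) : (node l r).numLeaves = (node r l).numLeaves := by
  simp [add_comm]

theorem leafSet_node_comm (l r : RTree L) : (node l r).leafSet = (node r l).leafSet := by
  ext x; simp [leafList, or_comm]

theorem IsPhylo.node_comm {l r : RTree L} (h : (node l r).IsPhylo) : (node r l).IsPhylo :=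
  List.nodup_append_comm.1 h

theorem height_le_udiam (T : RTree L) : T.height ≤ T.udiam := by
  cases T with
  | leaf b => simp [height, udiam]
  | node l r => simp only [height, udiam]; omega

theorem height_le_two_mul_uradius (T : RTree L) : T.height ≤ 2 * T.uradius := by
  have := T.height_le_udiam
  unfold uradius
  omega

namespace Embeds

theorem of_mem {x : L} {T : RTree L} (h : x ∈ T.leafList) : Embeds (RTree.leaf x) T := by
  induction T with
  | leaf b => rw [List.mem_singleton.1 h]; exact .leaf b
  | node l r ihl ihr =>
    rcases List.mem_append.1 h with h | h
    · exact .left (ihl h)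
    · exact .right (ihr h)

theorem subset {S T : RTree L} (h : Embeds S T) : S.leafList ⊆ T.leafList := by
  induction h with
  | leaf b => exact List.Subset.refl _
  | left _ ih | right _ ih | pair _ _ ih ih₂ | pair_swap _ _ ih ih₂ =>
    intro x hx
    simp only [leafList, List.mem_append] at hx ⊢
    grind

theorem height_le {S T : RTree L} (h : Embeds S T) : S.height ≤ T.height := by
  induction h with
  | leaf b => exact le_rfl
  | left _ ih | right _ ih => simp only [height]; omega
  | pair _ _ ih₁ ih₂ | pair_swap _ _ ih₁ ih₂ => simp only [height]; omega

theorem trans {S U T : RTree L} (h₁ : Embeds S U) (h₂ : Embeds U T) : Embeds S T := by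
  induction h₂ generalizing S with
  | leaf b => exact h₁
  | left _ ih => exact .left (ih h₁)
  | right _ ih => exact .right (ih h₁)
  | pair _ _ ihl ihr =>
    cases h₁ with
    | left h => exact .left (ihl h)
    | right h => exact .right (ihr h)
    | pair ha hb => exact .pair (ihl ha) (ihr hb)
    | pair_swap ha hb => exact .pair_swap (ihr ha) (ihl hb)
  | pair_swap _ _ ihl ihr =>
    cases h₁ with
    | left h => exact .right (ihl h)
    | right h => exact .left (ihr h)
    | pair ha hb => exact .pair_swap (ihl ha) (ihr hb)
    | pair_swap ha hb => exact .pair (ihr ha) (ihl hb)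

theorem node_comm {S l r : RTree L} (h : Embeds S (node l r)) : Embeds S (node r l) := by
  cases h with
  | left h => exact .right h
  | right h => exact .left h
  | pair ha hb => exact .pair_swap ha hb
  | pair_swap ha hb => exact .pair ha hb

end Embeds

theorem le_umast {T₁ T₂ S : RTree L} (hS : S.IsPhylo) (h₁ : Embeds S T₁) (h₂ : Embeds S T₂) :
    S.numLeaves ≤ umast T₁ T₂ := by
  refine le_csSup ⟨T₁.numLeaves, ?_⟩ ⟨S, S, hS, hS, h₁, h₂, Relation.EqvGen.refl S, rfl⟩
  rintro n ⟨S₁, -, hS₁, -, hE, -, -, rfl⟩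
  exact hS₁.length_le_of_subset hE.subset

/-- The restriction `T|{x | p x}`, as a rooted tree embedded in `T`. -/
theorem exists_embeds_leafList_eq_filter (T : RTree L) (p : L → Bool)
    (h : ∃ x ∈ T.leafList, p x) : ∃ S, Embeds S T ∧ S.leafList = T.leafList.filter p := by
  induction T with
  | leaf b =>
    obtain ⟨x, hx, hpx⟩ := h
    rw [List.mem_singleton.1 hx] at hpx
    exact ⟨leaf b, .leaf b, by simp [leafList, hpx]⟩
  | node l r ihl ihr =>
    simp only [leafList, List.filter_append]
    by_cases hl : ∃ x ∈ l.leafList, p x <;> by_cases hr : ∃ x ∈ r.leafList, p x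
    · obtain ⟨Sl, hSl, hl'⟩ := ihl hl
      obtain ⟨Sr, hSr, hr'⟩ := ihr hr
      exact ⟨node Sl Sr, .pair hSl hSr, by rw [← hl', ← hr']; rfl⟩
    · obtain ⟨Sl, hSl, hl'⟩ := ihl hl
      push Not at hr
      exact ⟨Sl, .left hSl, by simp [hl', List.filter_eq_nil_iff.2 hr]⟩
    · obtain ⟨Sr, hSr, hr'⟩ := ihr hr
      push Not at hl
      exact ⟨Sr, .right hSr, by simp [hr', List.filter_eq_nil_iff.2 hl]⟩
    · obtain ⟨x, hx, hpx⟩ := h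
      rcases List.mem_append.1 hx with hx | hx
      exacts [(hl ⟨x, hx, hpx⟩).elim, (hr ⟨x, hx, hpx⟩).elim]

section Counting

variable [DecidableEq L]

def numCommonLeaves (A X : RTree L) : ℕ := (A.leafList.filter (· ∈ X.leafList)).length

theorem numCommonLeaves_add_numCommonLeaves {A X Y : RTree L}
    (hXY : X.leafList.Disjoint Y.leafList)
    (hA : ∀ x ∈ A.leafList, x ∈ X.leafList ∨ x ∈ Y.leafList) :
    numCommonLeaves A X + numCommonLeaves A Y = A.numLeaves := by
  rw [numLeaves, List.length_eq_length_filter_add (· ∈ X.leafList), numCommonLeaves,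
    numCommonLeaves]
  congr 2
  refine List.filter_congr fun x hx => ?_
  rcases hA x hx with h | h
  · simpa [h] using fun hy => hXY h hy
  · simpa [h] using fun hx => hXY hx h

theorem numCommonLeaves_eq_numLeaves {A X : RTree L} (h : ∀ x ∈ A.leafList, x ∈ X.leafList) :
    numCommonLeaves A X = A.numLeaves := by
  rw [numCommonLeaves, List.filter_eq_self.2 (by simpa using h), numLeaves]

theorem exists_restrict_common {A X : RTree L} (hA : A.IsPhylo) (hX : X.IsPhylo)
    (h : ∃ x ∈ A.leafList, x ∈ X.leafList) :
    ∃ A' X', Embeds A' A ∧ Embeds X' X ∧ A'.IsPhylo ∧ X'.IsPhylo ∧ A'.leafSet = X'.leafSet ∧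
      A'.numLeaves = numCommonLeaves A X := by
  obtain ⟨x, hxA, hxX⟩ := h
  obtain ⟨A', hA', hA'l⟩ := A.exists_embeds_leafList_eq_filter (· ∈ X.leafList) ⟨x, hxA, by simpa⟩
  obtain ⟨X', hX', hX'l⟩ := X.exists_embeds_leafList_eq_filter (· ∈ A.leafList) ⟨x, hxX, by simpa⟩
  refine ⟨A', X', hA', hX', ?_, ?_, ?_, by rw [numLeaves, hA'l, numCommonLeaves]⟩
  · rw [IsPhylo, hA'l]; exact hA.filter _
  · rw [IsPhylo, hX'l]; exact hX.filter _
  · ext z; simp [hA'l, hX'l, and_comm]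

end Counting

def HasAgreementBound (t : ℕ) (T₁ T₂ : RTree L) : Prop :=
  ∃ S : RTree L, S.IsPhylo ∧ Embeds S T₁ ∧ Embeds S T₂ ∧
    Real.logb 2 T₁.numLeaves ≤ t * S.numLeaves + 3 * T₁.height / 2 ^ t

namespace HasAgreementBound

theorem of_mem {x : L} {T : RTree L} (hx : x ∈ T.leafList) : HasAgreementBound t (leaf x) T :=
  ⟨leaf x, List.nodup_singleton x, .leaf x, .of_mem hx, by simp [numLeaves, leafList, height]⟩

theorem node_comm_left {A B T : RTree L} (h : HasAgreementBound t (node B A) T) :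
    HasAgreementBound t (node A B) T := by
  obtain ⟨S, hS, hSBA, hST, hlog⟩ := h
  exact ⟨S, hS, hSBA.node_comm, hST, by rwa [numLeaves_node, add_comm, ← numLeaves_node,
    height_node_comm]⟩

theorem node_comm_right {T X Y : RTree L} (h : HasAgreementBound t T (node Y X)) :
    HasAgreementBound t T (node X Y) := by
  obtain ⟨S, hS, hST, hSYX, hlog⟩ := h
  exact ⟨S, hS, hST, hSYX.node_comm, hlog⟩

theorem node_of_restrict {A B X Y A' X' : RTree L} (h : HasAgreementBound t A' X')
    (hA' : Embeds A' A) (hX' : Embeds X' X) (hφ : (node A B).IsPhylo)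
    (hbig : (node A B).numLeaves ≤ 2 ^ t * A'.numLeaves) (hy : ∃ y ∈ B.leafList, y ∈ Y.leafList) :
    HasAgreementBound t (node A B) (node X Y) := by
  obtain ⟨S, hS, hSA', hSX', hlog⟩ := h
  obtain ⟨y, hyB, hyY⟩ := hy
  refine ⟨node S (leaf y), ?_, .pair (hSA'.trans hA') (.of_mem hyB),
    .pair (hSX'.trans hX') (.of_mem hyY), ?_⟩
  · refine List.nodup_append.2 ⟨hS, List.nodup_singleton y, fun a ha b hb => ?_⟩
    rw [List.mem_singleton.1 hb]
    exact fun hay => List.disjoint_of_nodup_append hφ ((hSA'.trans hA').subset ha) (hay ▸ hyB)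
  · have hcount : Real.logb 2 (node A B).numLeaves ≤ t + Real.logb 2 A'.numLeaves :=
      Real.logb_le_add_logb_of_le_two_pow_mul (by exact_mod_cast numLeaves_pos _)
        (by exact_mod_cast numLeaves_pos _) (by exact_mod_cast hbig)
    have hheight : 3 * (A'.height : ℝ) / 2 ^ t ≤ 3 * (node A B).height / 2 ^ t := by
      have := hA'.height_le
      gcongr
      simp only [height]
      omega
    rw [numLeaves_node S, show (leaf y).numLeaves = 1 from rfl]
    push_cast
    linarith

theorem node_of_small (ht : 1 ≤ t) {A B T T' : RTree L} (h : HasAgreementBound t A T')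
    (hT' : Embeds T' T) (hsmall : 2 ^ t * B.numLeaves < (node A B).numLeaves) :
    HasAgreementBound t (node A B) T := by
  obtain ⟨S, hS, hSA, hST', hlog⟩ := h
  refine ⟨S, hS, .left hSA, hST'.trans hT', ?_⟩
  have hcount : Real.logb 2 (node A B).numLeaves ≤ Real.logb 2 A.numLeaves + 3 / 2 ^ t := by
    refine Real.logb_le_logb_add_of_two_pow_mul_sub_lt (by exact_mod_cast numLeaves_pos _)
      (by exact_mod_cast numLeaves_pos _) ht ?_
    rw [numLeaves_node, Nat.cast_add, add_sub_cancel_left]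
    exact_mod_cast numLeaves_node A B ▸ hsmall
  have hheight : 3 * (A.height : ℝ) / 2 ^ t + 3 / 2 ^ t ≤ 3 * (node A B).height / 2 ^ t := by
    rw [← add_div]
    gcongr
    have : A.height + 1 ≤ (node A B).height := by simp only [height]; omega
    norm_cast
    omega
  linarith

theorem node_of_common [DecidableEq L] {A B X Y : RTree L}
    (IH : ∀ U₁ U₂ : RTree L, U₁.height < (node A B).height → U₁.IsPhylo → U₂.IsPhylo →
      U₁.leafSet = U₂.leafSet → HasAgreementBound t U₁ U₂)
    (hφ : (node A B).IsPhylo) (hX : X.IsPhylo)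
    (hbig : (node A B).numLeaves ≤ 2 ^ t * numCommonLeaves A X)
    (hy : ∃ y ∈ B.leafList, y ∈ Y.leafList) : HasAgreementBound t (node A B) (node X Y) := by
  have hcommon : ∃ x ∈ A.leafList, x ∈ X.leafList := by
    have hpos : 0 < numCommonLeaves A X :=
      Nat.pos_of_mul_pos_left ((numLeaves_pos _).trans_le hbig)
    obtain ⟨x, hx⟩ := List.exists_mem_of_length_pos hpos
    exact ⟨x, List.mem_of_mem_filter hx, by simpa using (List.mem_filter.1 hx).2⟩
  obtain ⟨A', X', hA', hX', hφA', hφX', hleaves, hnum⟩ :=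
    exists_restrict_common hφ.of_append_left hX hcommon
  have hheight : A'.height < (node A B).height := by
    have := hA'.height_le
    simp only [height]
    omega
  exact (IH A' X' hheight hφA' hφX' hleaves).node_of_restrict hA' hX' hφ (hnum ▸ hbig) hy

theorem node_of_le_numCommonLeaves [DecidableEq L] (ht : 2 ≤ t)
    {A B X Y : RTree L}
    (IH : ∀ U₁ U₂ : RTree L, U₁.height < (node A B).height → U₁.IsPhylo → U₂.IsPhylo →
      U₁.leafSet = U₂.leafSet → HasAgreementBound t U₁ U₂)
    (hφ₁ : (node A B).IsPhylo) (hφ₂ : (node X Y).IsPhylo)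
    (hleaves : (node A B).leafSet = (node X Y).leafSet)
    (hbig : (node A B).numLeaves ≤ 2 ^ t * numCommonLeaves A X) :
    HasAgreementBound t (node A B) (node X Y) := by
  have hX : X.IsPhylo := hφ₂.of_append_left
  by_cases hBY : ∃ y ∈ B.leafList, y ∈ Y.leafList
  · exact .node_of_common IH hφ₁ hX hbig hBY
  push Not at hBY
  have hmem : ∀ x, x ∈ A.leafList ∨ x ∈ B.leafList ↔ x ∈ X.leafList ∨ x ∈ Y.leafList := by
    simpa [Set.ext_iff, leafList] using hleaves
  have hBX : ∀ x ∈ B.leafList, x ∈ X.leafList := fun x hx =>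
    ((hmem x).1 (.inr hx)).resolve_right (hBY x hx)
  obtain ⟨y, hyY⟩ := Y.exists_mem_leafList
  have hyA : y ∈ A.leafList := ((hmem y).2 (.inr hyY)).resolve_right fun hyB => hBY y hyB hyY
  by_cases hc : (node A B).numLeaves ≤ 2 ^ t * numCommonLeaves B X
  · exact node_comm_left (node_of_common
      (fun U₁ U₂ hU => IH U₁ U₂ (hU.trans_eq (height_node_comm B A))) hφ₁.node_comm hX
      (by rwa [numLeaves_node_comm]) ⟨y, hyA, hyY⟩)
  · obtain ⟨T', hT', hT'l⟩ := (node X Y).exists_embeds_leafList_eq_filter (· ∈ A.leafList)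
      ⟨y, List.mem_append_right _ hyY, by simpa⟩
    have hA : HasAgreementBound t A T' := by
      refine IH A T' (by simp only [height]; omega) hφ₁.of_append_left
        (by rw [IsPhylo, hT'l]; exact hφ₂.filter _) ?_
      ext x
      have := hmem x
      simp only [mem_leafSet, hT'l, leafList, List.mem_filter, List.mem_append, decide_eq_true_eq]
      tauto
    refine hA.node_of_small (by omega) hT' ?_
    rwa [numCommonLeaves_eq_numLeaves hBX, not_le] at hc

end HasAgreementBound

theorem hasAgreementBound_node [DecidableEq L] (ht : 2 ≤ t) {A B X Y : RTree L}
    (IH : ∀ U₁ U₂ : RTree L, U₁.height < (node A B).height → U₁.IsPhylo → U₂.IsPhylo →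
      U₁.leafSet = U₂.leafSet → HasAgreementBound t U₁ U₂)
    (h₁ : (node A B).IsPhylo) (h₂ : (node X Y).IsPhylo)
    (hl : (node A B).leafSet = (node X Y).leafSet) :
    HasAgreementBound t (node A B) (node X Y) := by
  have hmem : ∀ x, x ∈ A.leafList ∨ x ∈ B.leafList ↔ x ∈ X.leafList ∨ x ∈ Y.leafList := by
    simpa [Set.ext_iff, leafList] using hl
  have hXY := List.disjoint_of_nodup_append h₂
  have hA := numCommonLeaves_add_numCommonLeaves hXY fun x hx => (hmem x).1 (.inl hx)
  have hB := numCommonLeaves_add_numCommonLeaves hXY fun x hx => (hmem x).1 (.inr hx)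
  have hm := numLeaves_node A B
  have hbig : ∀ c, (node A B).numLeaves ≤ 4 * c → (node A B).numLeaves ≤ 2 ^ t * c :=
    fun c hc => hc.trans (Nat.mul_le_mul_right c (by simpa using Nat.pow_le_pow_right two_pos ht))
  have IH' : ∀ U₁ U₂ : RTree L, U₁.height < (node B A).height → U₁.IsPhylo → U₂.IsPhylo →
      U₁.leafSet = U₂.leafSet → HasAgreementBound t U₁ U₂ :=
    fun U₁ U₂ hU => IH U₁ U₂ (hU.trans_eq (height_node_comm B A))
  have hm' := numLeaves_node_comm A B
  rcases (by omega : (node A B).numLeaves ≤ 4 * numCommonLeaves A X ∨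
      (node A B).numLeaves ≤ 4 * numCommonLeaves A Y ∨
      (node A B).numLeaves ≤ 4 * numCommonLeaves B X ∨
      (node A B).numLeaves ≤ 4 * numCommonLeaves B Y) with h | h | h | h
  · exact .node_of_le_numCommonLeaves ht IH h₁ h₂ hl (hbig _ h)
  · exact (HasAgreementBound.node_of_le_numCommonLeaves ht IH h₁ h₂.node_comm
      (hl.trans (leafSet_node_comm X Y)) (hbig _ h)).node_comm_right
  · exact (HasAgreementBound.node_of_le_numCommonLeaves ht IH' h₁.node_comm h₂
      ((leafSet_node_comm B A).trans hl) (hm' ▸ hbig _ h)).node_comm_left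
  · exact (HasAgreementBound.node_of_le_numCommonLeaves ht IH' h₁.node_comm h₂.node_comm
      ((leafSet_node_comm B A).trans (hl.trans (leafSet_node_comm X Y))) (hm' ▸ hbig _ h)
      ).node_comm_right.node_comm_left

theorem hasAgreementBound_of_leafSet_eq (ht : 2 ≤ t) {T₁ T₂ : RTree L} (h₁ : T₁.IsPhylo)
    (h₂ : T₂.IsPhylo) (hl : T₁.leafSet = T₂.leafSet) : HasAgreementBound t T₁ T₂ := by
  classical
  have IH : ∀ U₁ U₂ : RTree L, U₁.height < T₁.height → U₁.IsPhylo → U₂.IsPhylo →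
      U₁.leafSet = U₂.leafSet → HasAgreementBound t U₁ U₂ :=
    fun U₁ U₂ _ h₁ h₂ hl => hasAgreementBound_of_leafSet_eq ht h₁ h₂ hl
  match T₁, T₂ with
  | leaf x, T₂ => exact .of_mem (hl ▸ List.mem_singleton_self x : x ∈ T₂.leafSet)
  | node A B, leaf z =>
    obtain ⟨x, hx⟩ := A.exists_mem_leafList
    obtain ⟨y, hy⟩ := B.exists_mem_leafList
    have hz : ∀ w ∈ (node A B).leafList, w = z := fun w hw =>
      List.mem_singleton.1 (show w ∈ (leaf z).leafSet from hl ▸ hw)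
    have hxy : x = y :=
      (hz x (List.mem_append_left _ hx)).trans (hz y (List.mem_append_right _ hy)).symm
    exact absurd (hxy ▸ hy) (List.disjoint_of_nodup_append h₁ hx)
  | node A B, node X Y => exact hasAgreementBound_node ht IH h₁ h₂ hl
termination_by T₁.height

end RTree

theorem stmt_4_general (k : ℝ) :
    ∃ αk : ℝ, 0 < αk ∧
      ∀ (L : Type) (T₁ T₂ : RTree L) (n : ℕ),
        T₁.IsPhylo → T₂.IsPhylo → T₁.leafSet = T₂.leafSet → T₁.numLeaves = n →
        (RTree.uradius T₁ : ℝ) ≤ k * Real.logb 2 n - 1 →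
        αk * Real.logb 2 n ≤ (RTree.umast T₁ T₂ : ℝ) := by
  obtain ⟨t₀, ht₀⟩ := pow_unbounded_of_one_lt (12 * k) one_lt_two
  obtain ⟨t, ht, hkt⟩ : ∃ t : ℕ, 2 ≤ t ∧ 12 * k ≤ 2 ^ t :=
    ⟨max 2 t₀, le_max_left _ _, ht₀.le.trans (pow_le_pow_right₀ one_le_two (le_max_right _ _))⟩
  refine ⟨1 / (2 * t), by positivity, fun L T₁ T₂ n h₁ h₂ hl hn hrad => ?_⟩
  obtain ⟨S, hS, hS₁, hS₂, hlog⟩ := RTree.hasAgreementBound_of_leafSet_eq ht h₁ h₂ hl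
  rw [hn] at hlog
  have hlogn : 0 ≤ Real.logb 2 n :=
    Real.logb_nonneg one_lt_two (by exact_mod_cast hn ▸ T₁.numLeaves_pos)
  have hheight : (T₁.height : ℝ) ≤ 2 * k * Real.logb 2 n := by
    have : (T₁.height : ℝ) ≤ 2 * T₁.uradius := by exact_mod_cast T₁.height_le_two_mul_uradius
    linarith
  have hdepth : 3 * (T₁.height : ℝ) / 2 ^ t ≤ Real.logb 2 n / 2 := by
    rw [div_le_iff₀ (by positivity)]
    nlinarith
  calc 1 / (2 * t) * Real.logb 2 n ≤ S.numLeaves := by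
        rw [one_div_mul_eq_div, div_le_iff₀ (by positivity)]
        linarith
    _ ≤ RTree.umast T₁ T₂ := by exact_mod_cast RTree.le_umast hS hS₁ hS₂

/-- For every real `k > 0` there is `α_k > 0` such that any two
unrooted binary phylogenetic trees `T₁`, `T₂` on the same leaf set of cardinality `n`,
where `T₁` has radius at most `k·log n - 1`, satisfy `mast{T₁,T₂} ≥ α_k·log n`. -/
theorem stmt_4 (k : ℝ) (hk : 0 < k) :
    ∃ αk : ℝ, 0 < αk ∧
      ∀ (L : Type) (T₁ T₂ : RTree L) (n : ℕ),
        T₁.IsPhylo → T₂.IsPhylo → T₁.leafSet = T₂.leafSet → T₁.numLeaves = n →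
        (RTree.uradius T₁ : ℝ) ≤ k * Real.logb 2 n - 1 →
        αk * Real.logb 2 n ≤ (RTree.umast T₁ T₂ : ℝ) :=
  stmt_4_general k
end
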